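/- Let (X,d,m) be a metric measure space, p ∈ (1,∞), and let D be a D-structure on (X,d,m) satisfying property L5. Then D satisfies property L4; that is, for every u ∈ S^p(X) and g1, g2 ∈ D[u], the function min{g1,g2} belongs to D[u]. -/

import Mathlib

open Filter Set
open scoped ENNReal NNReal Topology

noncomputable section

namespace AxSob

variable {X : Type*} [MetricSpace X] [MeasurableSpace X]

/-- The quantity `∫_B |u|^p dm`. -/
def lpIntOn (m : MeasureTheory.Measure X) (p : ℝ) (u : X → ℝ) (B : Set X) : ℝ≥0∞ :=
  ∫⁻ x in B, ENNReal.ofReal |u x| ^ p ∂m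

/-- `u` belongs to `L^p(m)`. -/
def LpMem (m : MeasureTheory.Measure X) (p : ℝ) (u : X → ℝ) : Prop :=
  Measurable u ∧ lpIntOn m p u Set.univ < ∞

/-- `u` belongs to `L^p_loc(m)`: it is Borel and `p`-integrable on every bounded Borel set. -/
def LpLocMem (m : MeasureTheory.Measure X) (p : ℝ) (u : X → ℝ) : Prop :=
  Measurable u ∧ ∀ B : Set X, MeasurableSet B → Bornology.IsBounded B → lpIntOn m p u B < ∞

/-- Convergence in `L^p(m)`. -/
def LpTendsto (m : MeasureTheory.Measure X) (p : ℝ) (g : ℕ → X → ℝ) (g₀ : X → ℝ) : Prop :=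
  Tendsto (fun n => lpIntOn m p (fun x => g n x - g₀ x) Set.univ) atTop (𝓝 0)

/-- Convergence in `L^p_loc(m)`. -/
def LpLocTendsto (m : MeasureTheory.Measure X) (p : ℝ) (u : ℕ → X → ℝ) (u₀ : X → ℝ) : Prop :=
  ∀ B : Set X, MeasurableSet B → Bornology.IsBounded B →
    Tendsto (fun n => lpIntOn m p (fun x => u n x - u₀ x) B) atTop (𝓝 0)

/-- `u` belongs to `L^∞(m)`. -/
def LinfMem (m : MeasureTheory.Measure X) (u : X → ℝ) : Prop :=
  Measurable u ∧ ∃ C : ℝ, ∀ᵐ x ∂m, |u x| ≤ C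

/-- A `D`-structure (à la Gol'dshtein–Troyanov) on a metric measure space `(X, d, m)`,
with exponent `p`.  To every function `u` (thought of as an element of `L^p_loc(m)`) it
associates the family `D u` of its pseudo-gradients: non-negative Borel functions,
considered up to `m`-a.e. equality, satisfying the axioms A1–A5. -/
structure DStructure (X : Type*) [MetricSpace X] [MeasurableSpace X]
    (m : MeasureTheory.Measure X) (p : ℝ) where
  D : (X → ℝ) → Set (X → ℝ)
  measurable_of_mem : ∀ u g, g ∈ D u → Measurable g
  nonneg_of_mem : ∀ u g, g ∈ D u → 0 ≤ g
  /-- `D` is defined on `L^p_loc(m)`, i.e. on `m`-a.e. equivalence classes. -/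
  congr_ae : ∀ u v : X → ℝ, u =ᵐ[m] v → D u = D v
  /-- pseudo-gradients are considered up to `m`-a.e. equality. -/
  mem_congr_ae : ∀ u g h : X → ℝ, g ∈ D u → g =ᵐ[m] h → Measurable h → 0 ≤ h → h ∈ D u
  /-- A1 (non triviality). -/
  axiomA1 : ∀ (u : X → ℝ) (K : ℝ≥0), LpLocMem m p u → 0 ≤ u → LipschitzWith K u →
    {x | 0 < u x}.indicator (fun _ => (K : ℝ)) ∈ D u
  /-- A2 (upper linearity). -/
  axiomA2 : ∀ (u₁ u₂ g₁ g₂ g : X → ℝ) (α₁ α₂ : ℝ),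
    LpLocMem m p u₁ → LpLocMem m p u₂ → g₁ ∈ D u₁ → g₂ ∈ D u₂ →
    Measurable g → 0 ≤ g → (∀ᵐ x ∂m, |α₁| * g₁ x + |α₂| * g₂ x ≤ g x) →
    g ∈ D (fun x => α₁ * u₁ x + α₂ * u₂ x)
  /-- A3 (Leibniz rule). -/
  axiomA3 : ∀ (u g φ : X → ℝ) (K : ℝ≥0) (M : ℝ),
    LpLocMem m p u → g ∈ D u → LipschitzWith K φ → (∀ x, |φ x| ≤ M) →
    (fun x => g x * M + (K : ℝ) * |u x|) ∈ D (fun x => φ x * u x)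
  /-- A4 (lattice property). -/
  axiomA4 : ∀ u₁ u₂ g₁ g₂ : X → ℝ,
    LpLocMem m p u₁ → LpLocMem m p u₂ → g₁ ∈ D u₁ → g₂ ∈ D u₂ →
    (fun x => max (g₁ x) (g₂ x)) ∈ D (fun x => max (u₁ x) (u₂ x)) ∧
    (fun x => max (g₁ x) (g₂ x)) ∈ D (fun x => min (u₁ x) (u₂ x))
  /-- A5 (completeness). -/
  axiomA5 : ∀ (u g : ℕ → X → ℝ) (u₀ g₀ : X → ℝ),
    (∀ n, LpLocMem m p (u n)) → (∀ n, g n ∈ D (u n)) → (∀ n, LpMem m p (g n)) →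
    LpLocMem m p u₀ → Measurable g₀ → 0 ≤ g₀ →
    LpLocTendsto m p u u₀ → LpTendsto m p g g₀ → g₀ ∈ D u₀

namespace DStructure

variable {m : MeasureTheory.Measure X} {p : ℝ}

/-- The `p`-Dirichlet energy `E_p(u|B) = inf { ∫_B g^p dm : g ∈ D[u] }`. -/
def energyOn (S : DStructure X m p) (u : X → ℝ) (B : Set X) : ℝ≥0∞ :=
  ⨅ (g : X → ℝ) (_ : g ∈ S.D u), lpIntOn m p g B

/-- The `p`-Dirichlet energy `E_p(u) = E_p(u|X)`. -/
def energy (S : DStructure X m p) (u : X → ℝ) : ℝ≥0∞ := S.energyOn u Set.univ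

/-- The Sobolev class `S^p(X) = { u ∈ L^p_loc(m) : E_p(u) < ∞ }`. -/
def SobolevClass (S : DStructure X m p) : Set (X → ℝ) :=
  {u | LpLocMem m p u ∧ S.energy u < ∞}

/-- The Sobolev space `W^{1,p}(X) = L^p(m) ∩ S^p(X)`. -/
def W1p (S : DStructure X m p) : Set (X → ℝ) :=
  {u | LpMem m p u ∧ S.energy u < ∞}

/-- The Sobolev norm `‖u‖ = (‖u‖_{L^p}^p + E_p(u))^{1/p}`. -/
def wNorm (S : DStructure X m p) (u : X → ℝ) : ℝ≥0∞ :=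
  (lpIntOn m p u Set.univ + S.energy u) ^ (1 / p)

/-- `g` is the minimal pseudo-gradient of `u`: `g ∈ D[u] ∩ L^p(m)` and
`∫ g^p dm = E_p(u)`. -/
def IsMinimalPG (S : DStructure X m p) (u g : X → ℝ) : Prop :=
  g ∈ S.D u ∧ LpMem m p g ∧ lpIntOn m p g Set.univ = S.energy u

/-- Property L1: if `u ∈ S^p(X)` is `m`-a.e. constant on a Borel set `B`, then
`E_p(u|B) = 0`. -/
def L1prop (S : DStructure X m p) : Prop :=
  ∀ u ∈ S.SobolevClass, ∀ B : Set X, MeasurableSet B →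
    (∃ c : ℝ, ∀ᵐ x ∂(m.restrict B), u x = c) → S.energyOn u B = 0

/-- Property L2: if `u ∈ S^p(X)` is `m`-a.e. constant on a Borel set `B`, then the
minimal pseudo-gradient vanishes `m`-a.e. on `B`. -/
def L2prop (S : DStructure X m p) : Prop :=
  ∀ u ∈ S.SobolevClass, ∀ B : Set X, MeasurableSet B →
    (∃ c : ℝ, ∀ᵐ x ∂(m.restrict B), u x = c) →
    ∀ g, S.IsMinimalPG u g → ∀ᵐ x ∂(m.restrict B), g x = 0

/-- Property L3: if `u ∈ S^p(X)` and `g ∈ D[u]`, then `χ_{u>0}·g ∈ D[u⁺]`. -/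
def L3prop (S : DStructure X m p) : Prop :=
  ∀ u ∈ S.SobolevClass, ∀ g ∈ S.D u,
    {x | 0 < u x}.indicator g ∈ S.D (fun x => max (u x) 0)

/-- Property L4: if `u ∈ S^p(X)` and `g₁, g₂ ∈ D[u]`, then `min{g₁,g₂} ∈ D[u]`. -/
def L4prop (S : DStructure X m p) : Prop :=
  ∀ u ∈ S.SobolevClass, ∀ g₁ ∈ S.D u, ∀ g₂ ∈ S.D u,
    (fun x => min (g₁ x) (g₂ x)) ∈ S.D u

/-- Property L5: the minimal pseudo-gradient satisfies `Du ≤ g` `m`-a.e. for every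
`g ∈ D[u]`. -/
def L5prop (S : DStructure X m p) : Prop :=
  ∀ u ∈ S.SobolevClass, ∀ g, S.IsMinimalPG u g →
    ∀ h ∈ S.D u, ∀ᵐ x ∂m, g x ≤ h x

/-- A pointwise local `D`-structure: it satisfies L1 and L5. -/
def PointwiseLocal (S : DStructure X m p) : Prop := S.L1prop ∧ S.L5prop

/-- Strong locality in the sense of Shanmugalingam. -/
def ShanmugalingamLocal (S : DStructure X m p) : Prop :=
  ∀ u₁ ∈ S.SobolevClass, ∀ u₂ ∈ S.SobolevClass, ∀ B : Set X, MeasurableSet B →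
    (∀ᵐ x ∂(m.restrict B), u₁ x = u₂ x) →
    ∀ g₁ ∈ S.D u₁, ∀ g₂ ∈ S.D u₂,
      (fun x => B.indicator g₁ x + Bᶜ.indicator g₂ x) ∈ S.D u₂

/-- Strong locality in the sense of Timoshin. -/
def TimoshinLocal (S : DStructure X m p) : Prop :=
  ∀ u₁ ∈ S.SobolevClass, ∀ u₂ ∈ S.SobolevClass,
    ∀ g₁ ∈ S.D u₁, ∀ g₂ ∈ S.D u₂,
      (fun x => {y | u₁ y < u₂ y}.indicator g₁ x + {y | u₂ y < u₁ y}.indicator g₂ x +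
        {y | u₁ y = u₂ y}.indicator (fun y => min (g₁ y) (g₂ y)) x)
        ∈ S.D (fun x => min (u₁ x) (u₂ x))

end DStructure

end AxSob

open AxSob AxSob.DStructure

/-!
Under L5 the minimal pseudo-gradient `Du` lies below both `g₁` and `g₂`, hence below
`min g₁ g₂`, and `D[u]` is closed upwards by A2; so everything rests on the existence of `Du`.
For `p > 1` this is the direct method. `D[u]` is convex by A2, and the uniform convexity of
`t ↦ t ^ p`, in the form `c |a - b|² (a + b)^(p-2) + ((a + b) / 2)^p ≤ (a^p + b^p) / 2`
(combined with Hölder's inequality when `p < 2`), makes every minimizing sequence Cauchy in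
`L^p`; its limit is again a pseudo-gradient by A5 and has energy `E_p(u)`.
-/

open MeasureTheory

namespace AxSob

section RpowInequalities

variable {p : ℝ}

lemma le_of_hasDerivAt_nonneg_Icc {f f' : ℝ → ℝ} {a b t : ℝ} (hf : ContinuousOn f (Icc a b))
    (hf' : ∀ x ∈ Ioo a b, HasDerivAt f (f' x) x) (hf'₀ : ∀ x ∈ Ioo a b, 0 ≤ f' x)
    (ht : t ∈ Icc a b) : f a ≤ f t := by
  refine monotoneOn_of_hasDerivWithinAt_nonneg (convex_Icc a b) hf (fun x hx => ?_)
    (fun x hx => hf'₀ x ?_) (left_mem_Icc.2 (ht.1.trans ht.2)) ht ht.1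
  · rw [interior_Icc] at hx
    exact (hf' x hx).hasDerivWithinAt
  · rwa [interior_Icc] at hx

lemma hasDerivAt_one_add_rpow {q t : ℝ} (ht : -1 < t) :
    HasDerivAt (fun t : ℝ => (1 + t) ^ q) (q * (1 + t) ^ (q - 1)) t := by
  simpa using ((hasDerivAt_id t).const_add 1).rpow_const (p := q)
    (Or.inl (by simp only [id]; linarith))

lemma hasDerivAt_one_sub_rpow {q t : ℝ} (ht : t < 1) :
    HasDerivAt (fun t : ℝ => (1 - t) ^ q) (-(q * (1 - t) ^ (q - 1))) t := by
  simpa using ((hasDerivAt_id t).const_sub 1).rpow_const (p := q)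
    (Or.inl (by simp only [id]; linarith))

-- `p (p - 1) min 1 (2 ^ (p - 2))` is a lower bound for `(x ^ p)''` on `[1, 2]`.
lemma min_one_two_rpow_le {t : ℝ} (ht : t ∈ Icc (0 : ℝ) 1) :
    min 1 ((2 : ℝ) ^ (p - 2)) ≤ (1 + t) ^ (p - 2) := by
  rcases le_total 2 p with h | h
  · exact (min_le_left _ _).trans (Real.one_le_rpow (by linarith [ht.1]) (by linarith))
  · exact (min_le_right _ _).trans
      (Real.rpow_le_rpow_of_nonpos (by linarith [ht.1]) (by linarith [ht.2]) (by linarith))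

lemma mul_le_rpow_sub_rpow (hp : 1 < p) {t : ℝ} (ht : t ∈ Icc (0 : ℝ) 1) :
    p * (p - 1) * min 1 (2 ^ (p - 2)) * t ≤ p * ((1 + t) ^ (p - 1) - (1 - t) ^ (p - 1)) := by
  set κ := p * (p - 1) * min 1 ((2 : ℝ) ^ (p - 2))
  have hmono := le_of_hasDerivAt_nonneg_Icc
    (f := fun t => p * ((1 + t) ^ (p - 1) - (1 - t) ^ (p - 1)) - κ * t)
    (f' := fun t => p * ((p - 1) * (1 + t) ^ (p - 2) + (p - 1) * (1 - t) ^ (p - 2)) - κ)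
    (by fun_prop (disch := linarith)) (fun t ht => ?_) (fun t ht => ?_) ht
  · simp only [add_zero, Real.one_rpow, sub_zero, sub_self, mul_zero, sub_nonneg] at hmono
    linarith
  · have h := (((hasDerivAt_one_add_rpow (q := p - 1) (by linarith [ht.1])).sub
      (hasDerivAt_one_sub_rpow (q := p - 1) ht.2)).const_mul p).sub ((hasDerivAt_id t).const_mul κ)
    refine h.congr_deriv ?_
    rw [show p - 1 - 1 = p - 2 by ring]
    ring
  · have hK := min_one_two_rpow_le (p := p) (Ioo_subset_Icc_self ht)
    have hpp : 0 < p * (p - 1) := by nlinarith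
    have h1t : 0 ≤ (1 - t) ^ (p - 2) := Real.rpow_nonneg (by linarith [ht.2]) _
    nlinarith [mul_le_mul_of_nonneg_left hK hpp.le, mul_nonneg hpp.le h1t]

lemma mul_sq_le_rpow_add_rpow (hp : 1 < p) {t : ℝ} (ht : t ∈ Icc (-1 : ℝ) 1) :
    p * (p - 1) * min 1 (2 ^ (p - 2)) / 2 * t ^ 2 ≤ (1 + t) ^ p + (1 - t) ^ p - 2 := by
  set κ := p * (p - 1) * min 1 ((2 : ℝ) ^ (p - 2))
  wlog h₀ : 0 ≤ t generalizing t
  · have := this (t := -t) ⟨by linarith [ht.2], by linarith [ht.1]⟩ (by linarith)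
    rw [neg_sq, sub_neg_eq_add, ← sub_eq_add_neg] at this
    linarith
  have hmono := le_of_hasDerivAt_nonneg_Icc
    (f := fun t => (1 + t) ^ p + (1 - t) ^ p - 2 - κ / 2 * t ^ 2)
    (f' := fun t => p * ((1 + t) ^ (p - 1) - (1 - t) ^ (p - 1)) - κ * t)
    (by fun_prop (disch := linarith)) (fun t ht => ?_)
    (fun t ht => sub_nonneg.2 (mul_le_rpow_sub_rpow hp (Ioo_subset_Icc_self ht)))
    (show t ∈ Icc 0 1 from ⟨h₀, ht.2⟩)
  · simp only [add_zero, sub_zero, Real.one_rpow, zero_pow two_ne_zero, mul_zero,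
      tsub_le_iff_right] at hmono
    linarith
  · have h := ((hasDerivAt_one_add_rpow (q := p) (by linarith [ht.1])).add
      (hasDerivAt_one_sub_rpow (q := p) ht.2)).sub_const 2 |>.sub
      (((hasDerivAt_id t).pow 2).const_mul (κ / 2))
    refine h.congr_deriv ?_
    simp only [id]
    ring

lemma exists_pos_mul_sq_mul_rpow_add_le (hp : 1 < p) :
    ∃ c : ℝ, 0 < c ∧ ∀ a b : ℝ, 0 ≤ a → 0 ≤ b →
      c * ((a - b) ^ 2 * (a + b) ^ (p - 2)) + ((a + b) / 2) ^ p ≤ (a ^ p + b ^ p) / 2 := by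
  set κ := p * (p - 1) * min 1 ((2 : ℝ) ^ (p - 2))
  have hκ : 0 < κ := mul_pos (mul_pos (by linarith) (by linarith))
    (lt_min one_pos (Real.rpow_pos_of_pos two_pos _))
  have h2p : (0 : ℝ) < 2 ^ p := Real.rpow_pos_of_pos two_pos p
  refine ⟨κ / (4 * 2 ^ p), by positivity, fun a b ha hb => ?_⟩
  rcases (add_nonneg ha hb).eq_or_lt' with hab | hab
  · obtain ⟨rfl, rfl⟩ : a = 0 ∧ b = 0 := ⟨by linarith, by linarith⟩
    simp [Real.zero_rpow (by linarith : p ≠ 0)]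
  obtain ⟨s, t, hs, ht, rfl, rfl⟩ : ∃ s t : ℝ, 0 < s ∧ t ∈ Icc (-1 : ℝ) 1 ∧
      a = s / 2 * (1 + t) ∧ b = s / 2 * (1 - t) := by
    refine ⟨a + b, (a - b) / (a + b), hab, ⟨?_, ?_⟩, ?_, ?_⟩
    · rw [le_div_iff₀ hab]; linarith
    · rw [div_le_iff₀ hab]; linarith
    · field_simp; ring
    · field_simp; ring
  have hsum : s / 2 * (1 + t) + s / 2 * (1 - t) = s := by ring
  have hdiff : (s / 2 * (1 + t) - s / 2 * (1 - t)) ^ 2 = s ^ 2 * t ^ 2 := by ring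
  have hA : s ^ 2 * s ^ (p - 2) = 2 ^ p * (s / 2) ^ p := by
    rw [Real.div_rpow hs.le two_pos.le, ← Real.rpow_natCast, ← Real.rpow_add hs]
    field_simp
    norm_num
  rw [hsum, hdiff, Real.mul_rpow (by positivity) (by linarith [ht.1]),
    Real.mul_rpow (by positivity) (by linarith [ht.2])]
  have key := mul_le_mul_of_nonneg_left (mul_sq_le_rpow_add_rpow hp ht)
    (Real.rpow_nonneg (by positivity : 0 ≤ s / 2) p)
  have hweight : κ / (4 * 2 ^ p) * (s ^ 2 * t ^ 2 * s ^ (p - 2)) = κ / 4 * t ^ 2 * (s / 2) ^ p := by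
    rw [show s ^ 2 * t ^ 2 * s ^ (p - 2) = t ^ 2 * (s ^ 2 * s ^ (p - 2)) by ring, hA]
    field_simp
  rw [hweight]
  linear_combination key / 2

lemma abs_sub_rpow_le (hp : 0 < p) {a b : ℝ} (ha : 0 ≤ a) (hb : 0 ≤ b) :
    |a - b| ^ p ≤ ((a - b) ^ 2 * (a + b) ^ (p - 2)) ^ (p / 2) * ((a + b) ^ p) ^ ((2 - p) / 2) := by
  rcases (add_nonneg ha hb).eq_or_lt' with hab | hab
  · obtain ⟨rfl, rfl⟩ : a = 0 ∧ b = 0 := ⟨by linarith, by linarith⟩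
    rw [sub_self, abs_zero, Real.zero_rpow hp.ne']
    positivity
  have hsq : (a - b) ^ 2 = |a - b| ^ (2 : ℝ) := by rw [Real.rpow_two, sq_abs]
  rw [Real.mul_rpow (sq_nonneg _) (Real.rpow_nonneg hab.le _), hsq, ← Real.rpow_mul (abs_nonneg _),
    ← Real.rpow_mul hab.le, ← Real.rpow_mul hab.le, mul_assoc, ← Real.rpow_add hab]
  ring_nf
  simp

end RpowInequalities

section Integrals

variable {X : Type*} [MeasurableSpace X] {m : Measure X} {p : ℝ}

lemma lpIntOn_univ (hp : 0 ≤ p) (u : X → ℝ) :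
    lpIntOn m p u univ = ∫⁻ x, ENNReal.ofReal (|u x| ^ p) ∂m := by
  simp_rw [lpIntOn, Measure.restrict_univ, ENNReal.ofReal_rpow_of_nonneg (abs_nonneg _) hp]

lemma lpIntOn_mono (hp : 0 ≤ p) {u v : X → ℝ} (h : ∀ x, |u x| ≤ |v x|) (B : Set X) :
    lpIntOn m p u B ≤ lpIntOn m p v B :=
  lintegral_mono fun x => ENNReal.rpow_le_rpow (ENNReal.ofReal_le_ofReal (h x)) hp

def weightedSqDist (m : Measure X) (p : ℝ) (f g : X → ℝ) : ℝ≥0∞ :=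
  ∫⁻ x, ENNReal.ofReal ((f x - g x) ^ 2 * (f x + g x) ^ (p - 2)) ∂m

lemma exists_mul_weightedSqDist_add_le (hp : 1 < p) :
    ∃ C : ℝ≥0∞, C ≠ 0 ∧ C ≠ ∞ ∧ ∀ f g : X → ℝ, Measurable f → Measurable g → 0 ≤ f → 0 ≤ g →
      C * weightedSqDist m p f g + lpIntOn m p (fun x => (f x + g x) / 2) univ ≤
        (lpIntOn m p f univ + lpIntOn m p g univ) / 2 := by
  obtain ⟨c, hc, hineq⟩ := exists_pos_mul_sq_mul_rpow_add_le hp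
  refine ⟨ENNReal.ofReal c, by simpa using hc, ENNReal.ofReal_ne_top,
    fun f g hf hg hf₀ hg₀ => ?_⟩
  have hp₀ : 0 ≤ p := by linarith
  rw [lpIntOn_univ hp₀, lpIntOn_univ hp₀, lpIntOn_univ hp₀, weightedSqDist,
    ← lintegral_const_mul _ (by fun_prop), ← lintegral_add_left (by fun_prop),
    ← lintegral_add_left (by fun_prop), ENNReal.div_eq_inv_mul,
    ← lintegral_const_mul _ (by fun_prop)]
  refine lintegral_mono fun x => ?_
  have hfx : 0 ≤ f x := hf₀ x
  have hgx : 0 ≤ g x := hg₀ x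
  have hw : 0 ≤ (f x + g x) ^ (p - 2) := Real.rpow_nonneg (by positivity) _
  rw [abs_of_nonneg hfx, abs_of_nonneg hgx, abs_of_nonneg (by positivity),
    ← ENNReal.ofReal_mul hc.le, ← ENNReal.ofReal_add (by positivity) (by positivity),
    ← ENNReal.ofReal_add (by positivity) (by positivity), ← ENNReal.div_eq_inv_mul,
    ← ENNReal.ofReal_ofNat 2, ← ENNReal.ofReal_div_of_pos two_pos]
  exact ENNReal.ofReal_le_ofReal (hineq _ _ hfx hgx)

lemma lpIntOn_sub_le_weightedSqDist (hp : 2 ≤ p) {f g : X → ℝ} (hf₀ : 0 ≤ f) (hg₀ : 0 ≤ g) :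
    lpIntOn m p (fun x => f x - g x) univ ≤ weightedSqDist m p f g := by
  rw [lpIntOn_univ (by linarith)]
  refine lintegral_mono fun x => ENNReal.ofReal_le_ofReal ?_
  have hfx : 0 ≤ f x := hf₀ x
  have hgx : 0 ≤ g x := hg₀ x
  calc |f x - g x| ^ p = |f x - g x| ^ (2 : ℝ) * |f x - g x| ^ (p - 2) := by
        rw [← Real.rpow_add' (abs_nonneg _) (by linarith)]
        ring_nf
    _ ≤ (f x - g x) ^ 2 * (f x + g x) ^ (p - 2) := by
        rw [Real.rpow_two, sq_abs]
        gcongr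
        exact abs_le.2 ⟨by linarith, by linarith⟩

lemma lpIntOn_sub_le_weightedSqDist_rpow_mul (hp₀ : 0 < p) (hp : p ≤ 2) {f g : X → ℝ}
    (hf : Measurable f) (hg : Measurable g) (hf₀ : 0 ≤ f) (hg₀ : 0 ≤ g) :
    lpIntOn m p (fun x => f x - g x) univ ≤
      weightedSqDist m p f g ^ (p / 2) * lpIntOn m p (fun x => f x + g x) univ ^ ((2 - p) / 2) := by
  rw [lpIntOn_univ hp₀.le, lpIntOn_univ hp₀.le, weightedSqDist]
  refine (lintegral_mono fun x => ?_).trans (ENNReal.lintegral_mul_norm_pow_le (by fun_prop)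
    (by fun_prop) (by positivity) (by linarith) (by ring))
  have hfx : 0 ≤ f x := hf₀ x
  have hgx : 0 ≤ g x := hg₀ x
  have hw : 0 ≤ (f x + g x) ^ (p - 2) := Real.rpow_nonneg (by positivity) _
  rw [ENNReal.ofReal_rpow_of_nonneg (by positivity) (by positivity),
    ENNReal.ofReal_rpow_of_nonneg (by positivity) (by linarith),
    ← ENNReal.ofReal_mul (by positivity), abs_of_nonneg (by positivity : 0 ≤ f x + g x)]
  exact ENNReal.ofReal_le_ofReal (abs_sub_rpow_le hp₀ hfx hgx)

lemma lpIntOn_add_le (hp : 1 ≤ p) {f g : X → ℝ} (hf : Measurable f) :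
    lpIntOn m p (fun x => f x + g x) univ ≤
      2 ^ (p - 1) * (lpIntOn m p f univ + lpIntOn m p g univ) := by
  simp only [lpIntOn, Measure.restrict_univ]
  rw [← lintegral_add_left (by fun_prop), ← lintegral_const_mul' _ _ (by simp)]
  refine lintegral_mono fun x => (ENNReal.rpow_le_rpow ?_ (by linarith)).trans
    (ENNReal.rpow_add_le_mul_rpow_add_rpow _ _ hp)
  exact (ENNReal.ofReal_le_ofReal (abs_add_le _ _)).trans ENNReal.ofReal_add_le

lemma tendsto_weightedSqDist_of_midpoint (hp : 1 < p) {ι : Type*} {l : Filter ι}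
    {f g : ι → X → ℝ} (hf : ∀ i, Measurable (f i)) (hg : ∀ i, Measurable (g i))
    (hf₀ : ∀ i, 0 ≤ f i) (hg₀ : ∀ i, 0 ≤ g i) {M : ℝ≥0∞} (hM : M ≠ ∞)
    (hbdd : ∀ᶠ i in l, lpIntOn m p (f i) univ + lpIntOn m p (g i) univ ≤ M)
    {ε : ι → ℝ≥0∞} (hε : Tendsto ε l (𝓝 0))
    (hmid : ∀ i, (lpIntOn m p (f i) univ + lpIntOn m p (g i) univ) / 2 ≤
      lpIntOn m p (fun x => (f i x + g i x) / 2) univ + ε i) :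
    Tendsto (fun i => weightedSqDist m p (f i) (g i)) l (𝓝 0) := by
  obtain ⟨C, hC₀, hC, hconv⟩ := exists_mul_weightedSqDist_add_le (m := m) hp
  have hlim : Tendsto (fun i => ε i / C) l (𝓝 0) := by
    simpa using ENNReal.Tendsto.div_const hε (Or.inr hC₀)
  refine tendsto_of_tendsto_of_tendsto_of_le_of_le' tendsto_const_nhds hlim
    (Eventually.of_forall fun _ => zero_le) ?_
  filter_upwards [hbdd] with i hi
  have hconvI := hconv _ _ (hf i) (hg i) (hf₀ i) (hg₀ i)
  have hfin : lpIntOn m p (fun x => (f i x + g i x) / 2) univ ≠ ∞ :=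
    ne_top_of_le_ne_top (ENNReal.div_ne_top (ne_top_of_le_ne_top hM hi) two_ne_zero)
      (le_add_self.trans hconvI)
  rw [ENNReal.le_div_iff_mul_le (Or.inl hC₀) (Or.inl hC), mul_comm]
  exact ENNReal.le_of_add_le_add_right hfin ((hconvI.trans (hmid i)).trans_eq (add_comm _ _))

theorem tendsto_lpIntOn_sub_of_midpoint (hp : 1 < p) {ι : Type*} {l : Filter ι}
    {f g : ι → X → ℝ} (hf : ∀ i, Measurable (f i)) (hg : ∀ i, Measurable (g i))
    (hf₀ : ∀ i, 0 ≤ f i) (hg₀ : ∀ i, 0 ≤ g i) {M : ℝ≥0∞} (hM : M ≠ ∞)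
    (hbdd : ∀ᶠ i in l, lpIntOn m p (f i) univ + lpIntOn m p (g i) univ ≤ M)
    {ε : ι → ℝ≥0∞} (hε : Tendsto ε l (𝓝 0))
    (hmid : ∀ i, (lpIntOn m p (f i) univ + lpIntOn m p (g i) univ) / 2 ≤
      lpIntOn m p (fun x => (f i x + g i x) / 2) univ + ε i) :
    Tendsto (fun i => lpIntOn m p (fun x => f i x - g i x) univ) l (𝓝 0) := by
  have hQ := tendsto_weightedSqDist_of_midpoint hp hf hg hf₀ hg₀ hM hbdd hε hmid
  rcases le_total 2 p with h2 | h2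
  · exact tendsto_of_tendsto_of_tendsto_of_le_of_le tendsto_const_nhds hQ (fun _ => zero_le)
      fun i => lpIntOn_sub_le_weightedSqDist h2 (hf₀ i) (hg₀ i)
  have hK : (2 ^ (p - 1) * M) ^ ((2 - p) / 2) ≠ ∞ := ENNReal.rpow_ne_top_of_nonneg (by linarith)
    (ENNReal.mul_ne_top (ENNReal.rpow_ne_top_of_nonneg (by linarith) ENNReal.ofNat_ne_top) hM)
  have hlim : Tendsto (fun i => weightedSqDist m p (f i) (g i) ^ (p / 2) *
      (2 ^ (p - 1) * M) ^ ((2 - p) / 2)) l (𝓝 0) := by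
    have := ENNReal.Tendsto.mul_const (hQ.ennrpow_const (p / 2)) (Or.inr hK)
    rwa [ENNReal.zero_rpow_of_pos (by linarith), zero_mul] at this
  refine tendsto_of_tendsto_of_tendsto_of_le_of_le' tendsto_const_nhds hlim
    (Eventually.of_forall fun _ => zero_le) ?_
  filter_upwards [hbdd] with i hi
  have hsum : lpIntOn m p (fun x => f i x + g i x) univ ≤ 2 ^ (p - 1) * M :=
    (lpIntOn_add_le hp.le (hf i)).trans (by gcongr)
  exact (lpIntOn_sub_le_weightedSqDist_rpow_mul (by linarith) h2 (hf i) (hg i) (hf₀ i)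
    (hg₀ i)).trans (by gcongr)

end Integrals

section LpCompleteness

variable {X : Type*} [MeasurableSpace X] {m : Measure X} {p : ℝ}

lemma eLpNorm_ofReal_eq_lpIntOn (hp : 0 < p) (u : X → ℝ) :
    eLpNorm u (ENNReal.ofReal p) m = lpIntOn m p u univ ^ (1 / p) := by
  rw [ENNReal.ofReal, eLpNorm_nnreal_eq_lintegral (by simpa using hp), Real.coe_toNNReal _ hp.le,
    lpIntOn, Measure.restrict_univ]
  simp_rw [Real.enorm_eq_ofReal_abs]

lemma tendsto_lpIntOn_iff_tendsto_eLpNorm (hp : 0 < p) {ι : Type*} {l : Filter ι}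
    {u : ι → X → ℝ} :
    Tendsto (fun i => lpIntOn m p (u i) univ) l (𝓝 0) ↔
      Tendsto (fun i => eLpNorm (u i) (ENNReal.ofReal p) m) l (𝓝 0) := by
  simp_rw [eLpNorm_ofReal_eq_lpIntOn hp]
  refine ⟨fun h => ?_, fun h => ?_⟩
  · have := h.ennrpow_const (1 / p)
    rwa [ENNReal.zero_rpow_of_pos (by positivity)] at this
  · simpa [← ENNReal.rpow_mul, hp.ne', ENNReal.zero_rpow_of_pos hp] using h.ennrpow_const p

lemma LpMem.memLp (hp : 0 < p) {u : X → ℝ} (hu : LpMem m p u) : MemLp u (ENNReal.ofReal p) m :=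
  ⟨hu.1.aestronglyMeasurable, by
    rw [eLpNorm_ofReal_eq_lpIntOn hp]
    exact ENNReal.rpow_lt_top_of_nonneg (by positivity) hu.2.ne⟩

theorem exists_lpTendsto_of_cauchy (hp : 1 ≤ p) {g : ℕ → X → ℝ} (hg : ∀ n, LpMem m p (g n))
    (hcauchy : Tendsto (fun nk : ℕ × ℕ => lpIntOn m p (fun x => g nk.1 x - g nk.2 x) univ)
      atTop (𝓝 0)) :
    ∃ g₀, Measurable g₀ ∧ LpTendsto m p g g₀ := by
  have hp₀ : 0 < p := by linarith
  have : Fact (1 ≤ ENNReal.ofReal p) := ⟨ENNReal.one_le_ofReal.2 hp⟩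
  set G : ℕ → Lp ℝ (ENNReal.ofReal p) m := fun n => ((hg n).memLp hp₀).toLp (g n)
  have hG : CauchySeq G := by
    rw [cauchySeq_iff_tendsto_dist_atTop_0]
    simp_rw [dist_edist, G, Lp.edist_toLp_toLp]
    rw [tendsto_lpIntOn_iff_tendsto_eLpNorm hp₀] at hcauchy
    exact (ENNReal.tendsto_toReal ENNReal.zero_ne_top).comp hcauchy
  obtain ⟨F, hF⟩ := cauchySeq_tendsto_of_complete hG
  refine ⟨F, (Lp.stronglyMeasurable F).measurable, ?_⟩
  rw [← Lp.toLp_coeFn F (Lp.memLp F), Lp.tendsto_Lp_iff_tendsto_eLpNorm''] at hF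
  exact (tendsto_lpIntOn_iff_tendsto_eLpNorm hp₀).2 hF

lemma lpTendsto_max_zero (hp : 0 ≤ p) {g : ℕ → X → ℝ} {g₀ : X → ℝ} (hg : ∀ n, 0 ≤ g n)
    (h : LpTendsto m p g g₀) : LpTendsto m p g fun x => max (g₀ x) 0 := by
  refine tendsto_of_tendsto_of_tendsto_of_le_of_le tendsto_const_nhds h (fun _ => zero_le)
    fun n => lpIntOn_mono hp (fun x => ?_) _
  have hx : 0 ≤ g n x := hg n x
  simpa only [max_eq_left hx] using abs_max_sub_max_le_abs (g n x) (g₀ x) 0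

lemma lpIntOn_le_of_lpTendsto (hp : 1 ≤ p) {g : ℕ → X → ℝ} {g₀ : X → ℝ}
    (hg : ∀ n, Measurable (g n)) (hg₀ : Measurable g₀) (h : LpTendsto m p g g₀) {a : ℝ≥0∞}
    (ha : Tendsto (fun n => lpIntOn m p (g n) univ) atTop (𝓝 a)) :
    lpIntOn m p g₀ univ ≤ a := by
  have hp₀ : 0 < p := by linarith
  rw [LpTendsto, tendsto_lpIntOn_iff_tendsto_eLpNorm hp₀] at h
  have ha' : Tendsto (fun n => eLpNorm (g n) (ENNReal.ofReal p) m) atTop (𝓝 (a ^ (1 / p))) := by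
    simp_rw [eLpNorm_ofReal_eq_lpIntOn hp₀]
    exact ha.ennrpow_const _
  have hle : eLpNorm g₀ (ENNReal.ofReal p) m ≤ a ^ (1 / p) := by
    refine ge_of_tendsto' (by simpa using ha'.add h) fun n => ?_
    calc eLpNorm g₀ (ENNReal.ofReal p) m = eLpNorm (g n - (g n - g₀)) (ENNReal.ofReal p) m := by
          rw [sub_sub_cancel]
      _ ≤ _ := eLpNorm_sub_le (hg n).aestronglyMeasurable
          ((hg n).sub hg₀).aestronglyMeasurable (ENNReal.one_le_ofReal.2 hp)
  rw [eLpNorm_ofReal_eq_lpIntOn hp₀] at hle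
  simpa [← ENNReal.rpow_mul, hp₀.ne'] using ENNReal.rpow_le_rpow hle hp₀.le

end LpCompleteness

namespace DStructure

variable {X : Type*} [MetricSpace X] [MeasurableSpace X] {m : Measure X} {p : ℝ}
  (S : DStructure X m p) {u : X → ℝ}

lemma mem_D_of_ae_le (hu : LpLocMem m p u) {g h : X → ℝ} (hg : g ∈ S.D u) (hh : Measurable h)
    (hh₀ : 0 ≤ h) (hle : ∀ᵐ x ∂m, g x ≤ h x) : h ∈ S.D u := by
  simpa using S.axiomA2 u u g g h 1 0 hu hu hg hg hh hh₀ (by simpa using hle)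

lemma midpoint_mem_D (hu : LpLocMem m p u) {g h : X → ℝ} (hg : g ∈ S.D u) (hh : h ∈ S.D u) :
    (fun x => (g x + h x) / 2) ∈ S.D u := by
  have hg₀ := S.nonneg_of_mem u g hg
  have hh₀ := S.nonneg_of_mem u h hh
  have := S.axiomA2 u u g h (fun x => (g x + h x) / 2) (1 / 2) (1 / 2) hu hu hg hh
    (((S.measurable_of_mem u g hg).add (S.measurable_of_mem u h hh)).div_const 2)
    (fun x => div_nonneg (add_nonneg (hg₀ x) (hh₀ x)) two_pos.le)
    (Eventually.of_forall fun x => by rw [abs_of_pos one_half_pos]; linarith)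
  rwa [show (fun x => 1 / 2 * u x + 1 / 2 * u x) = u from funext fun x => by ring] at this

lemma energy_le_lpIntOn {g : X → ℝ} (hg : g ∈ S.D u) : S.energy u ≤ lpIntOn m p g univ :=
  iInf₂_le g hg

lemma exists_seq_mem_D_tendsto_energy (hE : S.energy u ≠ ∞) :
    ∃ g : ℕ → X → ℝ, (∀ n, g n ∈ S.D u) ∧ (∀ n, lpIntOn m p (g n) univ ≠ ∞) ∧
      Tendsto (fun n => lpIntOn m p (g n) univ) atTop (𝓝 (S.energy u)) := by
  have hlt (n : ℕ) : ∃ g ∈ S.D u, lpIntOn m p g univ < S.energy u + (n : ℝ≥0∞)⁻¹ :=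
    lt_biInf_iff.mp (ENNReal.lt_add_right hE (ENNReal.inv_ne_zero.2 (ENNReal.natCast_ne_top n)))
  choose g hg hlt using hlt
  refine ⟨g, hg, fun n => (hlt n).ne_top, ?_⟩
  have hlim : Tendsto (fun n : ℕ => S.energy u + (n : ℝ≥0∞)⁻¹) atTop (𝓝 (S.energy u)) := by
    simpa using tendsto_const_nhds.add ENNReal.tendsto_inv_nat_nhds_zero
  exact tendsto_of_tendsto_of_tendsto_of_le_of_le tendsto_const_nhds hlim
    (fun n => S.energy_le_lpIntOn (hg n)) fun n => (hlt n).le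

lemma mem_D_of_lpTendsto (hp : 0 < p) (hu : LpLocMem m p u) {g : ℕ → X → ℝ}
    (hg : ∀ n, g n ∈ S.D u) (hgp : ∀ n, LpMem m p (g n)) {g₀ : X → ℝ} (hg₀ : Measurable g₀)
    (hg₀' : 0 ≤ g₀) (h : LpTendsto m p g g₀) : g₀ ∈ S.D u := by
  refine S.axiomA5 (fun _ => u) g u g₀ (fun _ => hu) hg hgp hu hg₀ hg₀' (fun B _ _ => ?_) h
  simp [lpIntOn, ENNReal.zero_rpow_of_pos hp]

theorem tendsto_lpIntOn_sub_of_tendsto_energy (hp : 1 < p) (hu : LpLocMem m p u)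
    (hE : S.energy u ≠ ∞) {g : ℕ → X → ℝ} (hg : ∀ n, g n ∈ S.D u)
    (hlim : Tendsto (fun n => lpIntOn m p (g n) univ) atTop (𝓝 (S.energy u))) :
    Tendsto (fun nk : ℕ × ℕ => lpIntOn m p (fun x => g nk.1 x - g nk.2 x) univ) atTop (𝓝 0) := by
  set E := S.energy u
  have hsum : Tendsto (fun nk : ℕ × ℕ => lpIntOn m p (g nk.1) univ + lpIntOn m p (g nk.2) univ)
      atTop (𝓝 (E + E)) := by
    rw [← prod_atTop_atTop_eq]
    exact (hlim.comp tendsto_fst).add (hlim.comp tendsto_snd)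
  have hEE : E + E ≠ ∞ := ENNReal.add_ne_top.2 ⟨hE, hE⟩
  refine tendsto_lpIntOn_sub_of_midpoint hp (fun nk => S.measurable_of_mem u _ (hg nk.1))
    (fun nk => S.measurable_of_mem u _ (hg nk.2)) (fun nk => S.nonneg_of_mem u _ (hg nk.1))
    (fun nk => S.nonneg_of_mem u _ (hg nk.2)) (ENNReal.add_ne_top.2 ⟨hEE, ENNReal.one_ne_top⟩)
    (hsum.eventually (eventually_le_nhds (ENNReal.lt_add_right hEE one_ne_zero)))
    (ε := fun nk => (lpIntOn m p (g nk.1) univ + lpIntOn m p (g nk.2) univ) / 2 - E) ?_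
    fun nk => le_add_tsub.trans (add_le_add (S.energy_le_lpIntOn
      (S.midpoint_mem_D hu (hg nk.1) (hg nk.2))) le_rfl)
  have := ENNReal.Tendsto.sub (ENNReal.Tendsto.div_const hsum (Or.inr two_ne_zero))
    tendsto_const_nhds (Or.inr hE)
  rwa [ENNReal.add_div, ENNReal.add_halves, tsub_self] at this

theorem exists_isMinimalPG (hp : 1 < p) (hu : u ∈ S.SobolevClass) : ∃ g, S.IsMinimalPG u g := by
  obtain ⟨hu, hE⟩ := hu
  obtain ⟨g, hg, hgfin, hlim⟩ := S.exists_seq_mem_D_tendsto_energy hE.ne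
  have hgm (n : ℕ) : Measurable (g n) := S.measurable_of_mem u _ (hg n)
  obtain ⟨g₀, hg₀, hconv⟩ := exists_lpTendsto_of_cauchy hp.le (fun n => ⟨hgm n, (hgfin n).lt_top⟩)
    (S.tendsto_lpIntOn_sub_of_tendsto_energy hp hu hE.ne hg hlim)
  have hconv' := lpTendsto_max_zero (by linarith) (fun n => S.nonneg_of_mem u _ (hg n)) hconv
  have hg₀' : Measurable fun x => max (g₀ x) 0 := hg₀.max measurable_const
  have hmem := S.mem_D_of_lpTendsto (by linarith) hu hg (fun n => ⟨hgm n, (hgfin n).lt_top⟩) hg₀'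
    (fun x => le_max_right _ _) hconv'
  have heq := le_antisymm (lpIntOn_le_of_lpTendsto hp.le hgm hg₀' hconv' hlim)
    (S.energy_le_lpIntOn hmem)
  exact ⟨_, hmem, ⟨hg₀', heq ▸ hE⟩, heq⟩

end DStructure

end AxSob

theorem L5_implies_L4_general {X : Type*} [MetricSpace X] [MeasurableSpace X]
    (m : MeasureTheory.Measure X)
    (p : ℝ) (hp : 1 < p) (S : DStructure X m p)
    (hL5 : S.L5prop) : S.L4prop := by
  intro u hu g₁ hg₁ g₂ hg₂
  obtain ⟨g, hg⟩ := S.exists_isMinimalPG hp hu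
  refine S.mem_D_of_ae_le hu.1 hg.1
    ((S.measurable_of_mem u g₁ hg₁).min (S.measurable_of_mem u g₂ hg₂))
    (fun x => le_min (S.nonneg_of_mem u g₁ hg₁ x) (S.nonneg_of_mem u g₂ hg₂ x)) ?_
  filter_upwards [hL5 u hu g hg g₁ hg₁, hL5 u hu g hg g₂ hg₂] with x h₁ h₂ using le_min h₁ h₂

/-- Property L5 implies property L4. -/
theorem L5_implies_L4 {X : Type*} [MetricSpace X] [CompleteSpace X]
    [TopologicalSpace.SeparableSpace X] [MeasurableSpace X] [BorelSpace X]
    (m : MeasureTheory.Measure X) (hm : m ≠ 0)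
    (hball : ∀ (x : X) (r : ℝ), m (Metric.ball x r) < ∞)
    (p : ℝ) (hp : 1 < p) (S : DStructure X m p)
    (hL5 : S.L5prop) : S.L4prop :=
  L5_implies_L4_general m p hp S hL5
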